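/- (Theorem 3, dynamic programming approach.) Fix n ≥ 1 and a horizon N ≥ 1. Let α, β, γ, ρ, λ†, δ_max > 0 and C(0),…,C(N−1) > 0. For each i ∈ {1,…,n} let A_i ∈ ℝ^{d×d} with ‖A_i‖ ≤ α, B_i ∈ ℝ^{d×m} with ‖B_i‖ ≤ β, x_i(0) ∈ ℝ^d with ‖x_i(0)‖ ≤ γ, let Q_i, R_i be symmetric positive definite with ‖Q_i‖ ≤ δ_max, and let H_i be symmetric with H_i ≥ ρI. Let λ_0,…,λ_{N−1} > 0 and define, for each i, the Riccati matrices by P_{i,N} = Q_i and P_{i,k} = A_iᵀP_{i,k+1}A_i + Q_i − A_iᵀP_{i,k+1}B_i ( B_iᵀP_{i,k+1}B_i + R_i + λ_k H_i )^{−1} B_iᵀP_{i,k+1}A_i; the controls by u_i(k) = −( B_iᵀP_{i,k+1}B_i + R_i + λ_k H_i )^{−1} B_iᵀP_{i,k+1}A_i x_i(k); and the states by x_i(k+1) = A_i x_i(k) + B_i u_i(k). Suppose the balance conditions Σ_{i=1}^{n} u_i(k)ᵀ H_i u_i(k) = C(k) hold for all k ∈ {0,…,N−1}. If δ_max · Σ_{t=1}^{N}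 γ α^{2t−1} ≤ (√(C(0)ρ)/(nβ)) λ†, and for every k ∈ {1,…,N−1}, δ_max · Σ_{t=k+1}^{N} [ γ α^{2t−k−1} + β Σ_{j=0}^{k−1} √(C(j)/ρ) α^{2t−j−k−2} ] ≤ (√(C(k)ρ)/(nβ)) λ†, then λ_k ≤ λ† for every k ∈ {0,…,N−1}. -/

import Mathlib

/-!
Write `M = BᵀPB + R + λH` and `G = BᵀPA`, with `P = P_{i,k+1}`. Completing the square in the
feedback `K = -M⁻¹G` rewrites a Riccati step as `Q + (A + BK)ᵀP(A + BK) + Kᵀ(R + λH)K`, so every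
`P_{i,k}` is positive semidefinite. Since the subtracted term `GᵀM⁻¹G` is positive semidefinite
too, backward induction gives `vᵀP_{i,k}v ≤ δmax (∑_{s ≤ N-k} α^{2s}) ‖v‖²`.

The balance condition and `H_i ≥ ρI` give `ρ‖u_i(k)‖² ≤ C(k)`. Forward induction on the dynamics
then bounds `‖x_i(k)‖` by `γα^k + β ∑_{j<k} √(C(j)/ρ) α^{k-1-j}`.

The feedback law reads `M u = -G x`, so `λ_k uᵀHu ≤ uᵀMu = -⟨Bu, P(Ax)⟩`, and Cauchy–Schwarz for
the form of `P` bounds this by the norm bound on `P` times `‖Bu‖ ‖Ax‖`. Summing over agents gives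
`λ_k C(k) ≤ n β √(C(k)/ρ) E_k`, where `E_k` is exactly the left-hand side of the hypothesis on
`δmax`. Since `√(C(k)/ρ) √(C(k)ρ) = C(k)`, that hypothesis gives `λ_k ≤ λ†`.
-/

open Finset Matrix
open scoped RealInnerProductSpace

noncomputable def matNorm {d m : ℕ} (M : Matrix (Fin d) (Fin m) ℝ) : ℝ :=
  ‖LinearMap.toContinuousLinearMap (Matrix.toEuclideanLin M)‖

namespace Matrix

theorem IsHermitian.transpose_eq_self {ι : Type*} {P : Matrix ι ι ℝ} (hP : P.IsHermitian) :
    Pᵀ = P := by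
  rw [← conjTranspose_eq_transpose_of_trivial, hP.eq]

theorem PosSemidef.of_sub_smul_one {ι : Type*} [DecidableEq ι] {H : Matrix ι ι ℝ} {ρ : ℝ}
    (hρ : 0 ≤ ρ) (h : (H - ρ • (1 : Matrix ι ι ℝ)).PosSemidef) : H.PosSemidef := by
  simpa using h.add (PosSemidef.one.smul hρ)

theorem PosSemidef.transpose_mul_mul_same {ι κ : Type*} [Fintype ι] [Finite κ]
    {P : Matrix ι ι ℝ} (hP : P.PosSemidef) (B : Matrix ι κ ℝ) : (Bᵀ * P * B).PosSemidef := by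
  simpa using hP.conjTranspose_mul_mul_same B

theorem posDef_transpose_mul_mul_add {ι κ : Type*} [Fintype ι] [Fintype κ] {B : Matrix ι κ ℝ}
    {P : Matrix ι ι ℝ} {S : Matrix κ κ ℝ} (hP : P.PosSemidef) (hS : S.PosDef) :
    (Bᵀ * P * B + S).PosDef := by
  rw [add_comm]
  exact hS.add_posSemidef (hP.transpose_mul_mul_same B)

variable {ι κ μ ν : Type*} [Fintype ι] [DecidableEq ι] [Fintype κ] [DecidableEq κ]
  [Fintype μ] [DecidableEq μ]

theorem toEuclideanLin_mul_apply (M : Matrix ν κ ℝ) (N : Matrix κ μ ℝ)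
    (v : EuclideanSpace ℝ μ) :
    toEuclideanLin (M * N) v = toEuclideanLin M (toEuclideanLin N v) := by
  simp

theorem inner_toEuclideanLin_transpose_mul (W : Matrix ι κ ℝ) (V : Matrix ι μ ℝ)
    (y : EuclideanSpace ℝ κ) (z : EuclideanSpace ℝ μ) :
    ⟪y, toEuclideanLin (Wᵀ * V) z⟫ = ⟪toEuclideanLin W y, toEuclideanLin V z⟫ := by
  rw [toEuclideanLin_mul_apply, ← conjTranspose_eq_transpose_of_trivial,
    toEuclideanLin_conjTranspose_eq_adjoint, LinearMap.adjoint_inner_right]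

theorem inner_toEuclideanLin_transpose_mul_mul (W : Matrix ι κ ℝ) (T : Matrix ι ι ℝ)
    (V : Matrix ι μ ℝ) (y : EuclideanSpace ℝ κ) (z : EuclideanSpace ℝ μ) :
    ⟪y, toEuclideanLin (Wᵀ * T * V) z⟫
      = ⟪toEuclideanLin W y, toEuclideanLin T (toEuclideanLin V z)⟫ := by
  rw [Matrix.mul_assoc, inner_toEuclideanLin_transpose_mul, toEuclideanLin_mul_apply]

theorem PosSemidef.inner_toEuclideanLin_self_nonneg {T : Matrix ι ι ℝ} (hT : T.PosSemidef)
    (v : EuclideanSpace ℝ ι) : 0 ≤ ⟪v, toEuclideanLin T v⟫ :=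
  (isPositive_toEuclideanLin_iff.mpr hT).inner_nonneg_right v

theorem PosSemidef.inner_toEuclideanLin_mul_self_le {T : Matrix ι ι ℝ} (hT : T.PosSemidef)
    (y z : EuclideanSpace ℝ ι) :
    ⟪y, toEuclideanLin T z⟫ * ⟪y, toEuclideanLin T z⟫
      ≤ ⟪y, toEuclideanLin T y⟫ * ⟪z, toEuclideanLin T z⟫ := by
  obtain ⟨S, rfl⟩ : ∃ S : Matrix ι ι ℝ, T = Sᵀ * S := by
    open scoped MatrixOrder in
    refine ⟨CFC.sqrt T, ?_⟩
    rw [← conjTranspose_eq_transpose_of_trivial,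
      (CFC.sqrt_nonneg T).posSemidef.isHermitian.eq, CFC.sqrt_mul_sqrt_self T hT.nonneg]
  simp only [inner_toEuclideanLin_transpose_mul]
  exact real_inner_mul_inner_self_le _ _

theorem PosSemidef.abs_inner_toEuclideanLin_le {T : Matrix ι ι ℝ} (hT : T.PosSemidef) {c : ℝ}
    (hc0 : 0 ≤ c) (hc : ∀ v, ⟪v, toEuclideanLin T v⟫ ≤ c * ‖v‖ ^ 2)
    (y z : EuclideanSpace ℝ ι) :
    |⟪y, toEuclideanLin T z⟫| ≤ c * ‖y‖ * ‖z‖ := by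
  refine abs_le_of_sq_le_sq ?_ (by positivity)
  calc ⟪y, toEuclideanLin T z⟫ ^ 2
      ≤ ⟪y, toEuclideanLin T y⟫ * ⟪z, toEuclideanLin T z⟫ := by
        rw [sq]; exact hT.inner_toEuclideanLin_mul_self_le y z
    _ ≤ (c * ‖y‖ ^ 2) * (c * ‖z‖ ^ 2) :=
        mul_le_mul (hc y) (hc z) (hT.inner_toEuclideanLin_self_nonneg z) (by positivity)
    _ = (c * ‖y‖ * ‖z‖) ^ 2 := by ring

theorem PosSemidef.mul_norm_sq_le_inner_toEuclideanLin {H : Matrix ι ι ℝ} {ρ : ℝ}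
    (h : (H - ρ • (1 : Matrix ι ι ℝ)).PosSemidef) (v : EuclideanSpace ℝ ι) :
    ρ * ‖v‖ ^ 2 ≤ ⟪v, toEuclideanLin H v⟫ := by
  have := h.inner_toEuclideanLin_self_nonneg v
  simp only [map_sub, map_smul, LinearMap.sub_apply, LinearMap.smul_apply, inner_sub_right,
    inner_smul_right, toLpLin_one, LinearMap.id_apply, real_inner_self_eq_norm_sq] at this
  linarith

end Matrix

section Riccati

variable {ι κ : Type*} [Fintype ι] [Fintype κ] [DecidableEq κ]

noncomputable def riccatiStep (A : Matrix ι ι ℝ) (B : Matrix ι κ ℝ) (Q : Matrix ι ι ℝ)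
    (S : Matrix κ κ ℝ) (P : Matrix ι ι ℝ) : Matrix ι ι ℝ :=
  Aᵀ * P * A + Q - Aᵀ * P * B * (Bᵀ * P * B + S)⁻¹ * (Bᵀ * P * A)

variable {A : Matrix ι ι ℝ} {B : Matrix ι κ ℝ} {P Q : Matrix ι ι ℝ} {S : Matrix κ κ ℝ}

theorem riccatiStep_eq_closedLoop {K : Matrix κ ι ℝ} (hP : P.IsHermitian) (hS : S.IsHermitian)
    (hM : IsUnit (Bᵀ * P * B + S).det) (hK : K = -((Bᵀ * P * B + S)⁻¹ * (Bᵀ * P * A))) :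
    riccatiStep A B Q S P = Q + (A + B * K)ᵀ * P * (A + B * K) + Kᵀ * S * K := by
  rw [riccatiStep]
  have hPt := hP.transpose_eq_self
  set M := Bᵀ * P * B + S
  set G := Bᵀ * P * A
  have hGt : Gᵀ = Aᵀ * P * B := by simp [G, transpose_mul, hPt, Matrix.mul_assoc]
  have hMt : Mᵀ = M := by
    simp [M, transpose_mul, hPt, hS.transpose_eq_self, Matrix.mul_assoc]
  have hKt : Kᵀ = -(Gᵀ * M⁻¹) := by
    rw [hK, transpose_neg, transpose_mul, transpose_nonsing_inv, hMt]
  have hGK : Gᵀ * K = -(Gᵀ * M⁻¹ * G) := by rw [hK, Matrix.mul_neg, Matrix.mul_assoc]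
  have hKG : Kᵀ * G = -(Gᵀ * M⁻¹ * G) := by rw [hKt, Matrix.neg_mul]
  have hKMK : Kᵀ * M * K = Gᵀ * M⁻¹ * G := by
    rw [hKt, hK, Matrix.neg_mul, Matrix.neg_mul, Matrix.mul_neg, neg_neg,
      nonsing_inv_mul_cancel_right _ _ hM, Matrix.mul_assoc]
  have hexpand : (A + B * K)ᵀ * P * (A + B * K) + Kᵀ * S * K
      = Aᵀ * P * A + Gᵀ * K + Kᵀ * G + Kᵀ * M * K := by
    rw [hGt]
    simp only [M, G, transpose_add, transpose_mul, Matrix.add_mul, Matrix.mul_add,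
      Matrix.mul_assoc]
    abel
  rw [add_assoc, hexpand, hGK, hKG, hKMK, ← hGt]
  abel

theorem posSemidef_riccatiStep (hP : P.PosSemidef) (hQ : Q.PosSemidef) (hS : S.PosDef) :
    (riccatiStep A B Q S P).PosSemidef := by
  rw [riccatiStep_eq_closedLoop hP.isHermitian hS.isHermitian
    (posDef_transpose_mul_mul_add hP hS).det_pos.ne'.isUnit rfl]
  exact (hQ.add (hP.transpose_mul_mul_same _)).add (hS.posSemidef.transpose_mul_mul_same _)

variable [DecidableEq ι]

theorem inner_toEuclideanLin_riccatiStep_le (hP : P.PosSemidef) (hS : S.PosDef)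
    (v : EuclideanSpace ℝ ι) :
    ⟪v, toEuclideanLin (riccatiStep A B Q S P) v⟫
      ≤ ⟪toEuclideanLin A v, toEuclideanLin P (toEuclideanLin A v)⟫ + ⟪v, toEuclideanLin Q v⟫ := by
  have hGt : (Bᵀ * P * A)ᵀ = Aᵀ * P * B := by
    simp [transpose_mul, hP.isHermitian.transpose_eq_self, Matrix.mul_assoc]
  have hsub := ((posDef_transpose_mul_mul_add (B := B) hP hS).inv.posSemidef.transpose_mul_mul_same
    (Bᵀ * P * A)).inner_toEuclideanLin_self_nonneg v
  rw [hGt] at hsub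
  simp only [riccatiStep, map_sub, map_add, LinearMap.sub_apply, LinearMap.add_apply,
    inner_sub_right, inner_add_right, inner_toEuclideanLin_transpose_mul_mul]
  linarith

theorem inner_toEuclideanLin_feedback_le (hP : P.PosSemidef) {c : ℝ} (hc0 : 0 ≤ c)
    (hc : ∀ v, ⟪v, toEuclideanLin P v⟫ ≤ c * ‖v‖ ^ 2) (hS : S.PosDef) (x : EuclideanSpace ℝ ι)
    {u : EuclideanSpace ℝ κ} (hu : u = -toEuclideanLin ((Bᵀ * P * B + S)⁻¹ * (Bᵀ * P * A)) x) :
    ⟪u, toEuclideanLin S u⟫ ≤ c * ‖toEuclideanLin B u‖ * ‖toEuclideanLin A x‖ := by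
  have hM := posDef_transpose_mul_mul_add (B := B) hP hS
  have hMu : toEuclideanLin (Bᵀ * P * B + S) u = -toEuclideanLin (Bᵀ * P * A) x := by
    rw [hu, map_neg, ← toEuclideanLin_mul_apply,
      mul_nonsing_inv_cancel_left _ _ hM.det_pos.ne'.isUnit]
  have hsplit : ⟪u, toEuclideanLin (Bᵀ * P * B + S) u⟫
      = ⟪toEuclideanLin B u, toEuclideanLin P (toEuclideanLin B u)⟫ + ⟪u, toEuclideanLin S u⟫ := by
    rw [map_add, LinearMap.add_apply, inner_add_right, inner_toEuclideanLin_transpose_mul_mul]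
  have hcross : ⟪u, toEuclideanLin (Bᵀ * P * B + S) u⟫
      = -⟪toEuclideanLin B u, toEuclideanLin P (toEuclideanLin A x)⟫ := by
    rw [hMu, inner_neg_right, inner_toEuclideanLin_transpose_mul_mul]
  have hBu := hP.inner_toEuclideanLin_self_nonneg (toEuclideanLin B u)
  have hCS := hP.abs_inner_toEuclideanLin_le hc0 hc (toEuclideanLin B u) (toEuclideanLin A x)
  linarith [neg_abs_le ⟪toEuclideanLin B u, toEuclideanLin P (toEuclideanLin A x)⟫]

end Riccati

section Bounds

variable {α β γ δ : ℝ}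

def riccatiBound (δ α : ℝ) (t : ℕ) : ℝ := δ * ∑ s ∈ range t, (α ^ 2) ^ s

theorem riccatiBound_nonneg (hδ : 0 ≤ δ) (t : ℕ) : 0 ≤ riccatiBound δ α t := by
  unfold riccatiBound; positivity

theorem riccatiBound_succ (t : ℕ) :
    riccatiBound δ α (t + 1) = α ^ 2 * riccatiBound δ α t + δ := by
  simp only [riccatiBound, sum_range_succ', pow_succ _ (_ : ℕ), ← sum_mul, pow_zero]
  ring

def stateBound (α β γ : ℝ) (b : ℕ → ℝ) (k : ℕ) : ℝ :=
  γ * α ^ k + β * ∑ j ∈ range k, b j * α ^ (k - 1 - j)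

theorem stateBound_succ (b : ℕ → ℝ) (k : ℕ) :
    stateBound α β γ b (k + 1) = α * stateBound α β γ b k + β * b k := by
  have hshift : ∀ j ∈ range k, b j * α ^ (k + 1 - 1 - j) = α * (b j * α ^ (k - 1 - j)) := by
    intro j hj
    rw [show k + 1 - 1 - j = k - 1 - j + 1 by grind, pow_succ]
    ring
  rw [stateBound, sum_range_succ, sum_congr rfl hshift, ← mul_sum, stateBound]
  simp only [Nat.add_sub_cancel, Nat.sub_self, pow_zero, pow_succ]
  ring

theorem le_stateBound {b e : ℕ → ℝ} {N : ℕ} (hα : 0 ≤ α) (h0 : e 0 ≤ γ)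
    (hstep : ∀ k < N, e (k + 1) ≤ α * e k + β * b k) {k : ℕ} (hk : k ≤ N) :
    e k ≤ stateBound α β γ b k := by
  induction k with
  | zero => simpa [stateBound] using h0
  | succ k ih =>
    rw [stateBound_succ]
    exact (hstep k hk).trans (by gcongr; exact ih (by omega))

theorem riccatiBound_mul_stateBound (b : ℕ → ℝ) (N k : ℕ) :
    riccatiBound δ α (N - k) * (α * stateBound α β γ b k)
      = δ * ∑ t ∈ Icc (k + 1) N,
          (γ * α ^ (2 * t - k - 1) + β * ∑ j ∈ range k, b j * α ^ (2 * t - j - k - 2)) := by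
  rw [← Ico_add_one_right_eq_Icc, sum_Ico_eq_sum_range, show N + 1 - (k + 1) = N - k by omega,
    riccatiBound, mul_assoc, sum_mul]
  congr 1
  refine sum_congr rfl fun s _ => ?_
  have hexp : ∀ j ∈ range k,
      b j * α ^ (2 * (k + 1 + s) - j - k - 2) = (α ^ 2) ^ s * α * (b j * α ^ (k - 1 - j)) := by
    intro j hj
    rw [show 2 * (k + 1 + s) - j - k - 2 = 2 * s + 1 + (k - 1 - j) by grind, pow_add, pow_succ,
      pow_mul]
    ring
  rw [sum_congr rfl hexp, ← mul_sum, show 2 * (k + 1 + s) - k - 1 = 2 * s + 1 + k by omega,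
    stateBound, ← pow_mul, pow_add, pow_succ]
  ring

theorem le_of_sum_eq_of_mul_le {n : ℕ} {q : Fin n → ℝ} {lam L c E ρ : ℝ} (hn : 0 < n)
    (hc : 0 < c) (hρ : 0 < ρ) (hβ : 0 < β) (hsum : ∑ i, q i = c)
    (hq : ∀ i, lam * q i ≤ β * √(c / ρ) * E) (hE : E ≤ √(c * ρ) / (n * β) * L) :
    lam ≤ L := by
  have hsqrt : √(c / ρ) * √(c * ρ) = c := by
    rw [← Real.sqrt_mul (by positivity), show c / ρ * (c * ρ) = c * c by field_simp,
      Real.sqrt_mul_self hc.le]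
  refine le_of_mul_le_mul_right ?_ hc
  calc lam * c = ∑ i, lam * q i := by rw [← mul_sum, hsum]
    _ ≤ ∑ _i : Fin n, β * √(c / ρ) * E := sum_le_sum fun i _ => hq i
    _ = n * β * √(c / ρ) * E := by
        rw [sum_const, card_univ, Fintype.card_fin, nsmul_eq_mul]
        ring
    _ ≤ n * β * √(c / ρ) * (√(c * ρ) / (n * β) * L) := by gcongr
    _ = √(c / ρ) * √(c * ρ) * L := by field_simp
    _ = L * c := by rw [hsqrt, mul_comm]

end Bounds

section OperatorNorm

variable {d m : ℕ} {A : Matrix (Fin d) (Fin d) ℝ} {B : Matrix (Fin d) (Fin m) ℝ}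
  {Q : Matrix (Fin d) (Fin d) ℝ} {α β δ : ℝ}

theorem matNorm_nonneg (M : Matrix (Fin d) (Fin m) ℝ) : 0 ≤ matNorm M := norm_nonneg _

theorem norm_toEuclideanLin_apply_le {M : Matrix (Fin d) (Fin m) ℝ} {a : ℝ} (hM : matNorm M ≤ a)
    (x : EuclideanSpace ℝ (Fin m)) : ‖toEuclideanLin M x‖ ≤ a * ‖x‖ :=
  ((LinearMap.toContinuousLinearMap (toEuclideanLin M)).le_opNorm x).trans
    (mul_le_mul_of_nonneg_right hM (norm_nonneg x))

theorem inner_toEuclideanLin_self_le {M : Matrix (Fin d) (Fin d) ℝ} {a : ℝ} (hM : matNorm M ≤ a)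
    (v : EuclideanSpace ℝ (Fin d)) : ⟪v, toEuclideanLin M v⟫ ≤ a * ‖v‖ ^ 2 :=
  calc ⟪v, toEuclideanLin M v⟫ ≤ ‖v‖ * ‖toEuclideanLin M v‖ := real_inner_le_norm _ _
    _ ≤ ‖v‖ * (a * ‖v‖) :=
        mul_le_mul_of_nonneg_left (norm_toEuclideanLin_apply_le hM v) (norm_nonneg v)
    _ = a * ‖v‖ ^ 2 := by ring

theorem inner_toEuclideanLin_riccatiStep_le_riccatiBound {P : Matrix (Fin d) (Fin d) ℝ}
    {S : Matrix (Fin m) (Fin m) ℝ} {t : ℕ} (hA : matNorm A ≤ α) (hQn : matNorm Q ≤ δ)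
    (hδ : 0 ≤ δ) (hP : P.PosSemidef)
    (hPle : ∀ v, ⟪v, toEuclideanLin P v⟫ ≤ riccatiBound δ α t * ‖v‖ ^ 2) (hS : S.PosDef)
    (v : EuclideanSpace ℝ (Fin d)) :
    ⟪v, toEuclideanLin (riccatiStep A B Q S P) v⟫ ≤ riccatiBound δ α (t + 1) * ‖v‖ ^ 2 := by
  have hAv : ‖toEuclideanLin A v‖ ^ 2 ≤ (α * ‖v‖) ^ 2 :=
    pow_le_pow_left₀ (norm_nonneg _) (norm_toEuclideanLin_apply_le hA v) 2
  calc ⟪v, toEuclideanLin (riccatiStep A B Q S P) v⟫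
      ≤ ⟪toEuclideanLin A v, toEuclideanLin P (toEuclideanLin A v)⟫ + ⟪v, toEuclideanLin Q v⟫ :=
        inner_toEuclideanLin_riccatiStep_le hP hS v
    _ ≤ riccatiBound δ α t * (α * ‖v‖) ^ 2 + δ * ‖v‖ ^ 2 := by
        gcongr
        · exact (hPle _).trans (by gcongr; exact riccatiBound_nonneg hδ t)
        · exact inner_toEuclideanLin_self_le hQn v
    _ = riccatiBound δ α (t + 1) * ‖v‖ ^ 2 := by rw [riccatiBound_succ]; ring

theorem riccati_posSemidef_and_inner_le {N : ℕ} {S : ℕ → Matrix (Fin m) (Fin m) ℝ}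
    {P : ℕ → Matrix (Fin d) (Fin d) ℝ} (hA : matNorm A ≤ α) (hQ : Q.PosSemidef)
    (hQn : matNorm Q ≤ δ) (hδ : 0 ≤ δ) (hS : ∀ k < N, (S k).PosDef) (hPN : P N = Q)
    (hP : ∀ k < N, P k = riccatiStep A B Q (S k) (P (k + 1))) {k : ℕ} (hk : k ≤ N) :
    (P k).PosSemidef
      ∧ ∀ v, ⟪v, toEuclideanLin (P k) v⟫ ≤ riccatiBound δ α (N - k + 1) * ‖v‖ ^ 2 := by
  induction hk using Nat.decreasingInduction with
  | self =>
    refine ⟨hPN ▸ hQ, fun v => ?_⟩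
    simpa [hPN, riccatiBound] using inner_toEuclideanLin_self_le hQn v
  | of_succ k hk ih =>
    obtain ⟨hPsd, hPle⟩ := ih
    rw [hP k hk, show N - k + 1 = N - (k + 1) + 1 + 1 by omega]
    exact ⟨posSemidef_riccatiStep hPsd hQ (hS k hk),
      inner_toEuclideanLin_riccatiStep_le_riccatiBound hA hQn hδ hPsd hPle (hS k hk)⟩

theorem norm_le_sqrt_div_of_inner_le {H : Matrix (Fin m) (Fin m) ℝ} {ρ C : ℝ} (hρ : 0 < ρ)
    (hH : (H - ρ • (1 : Matrix (Fin m) (Fin m) ℝ)).PosSemidef) {u : EuclideanSpace ℝ (Fin m)}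
    (hu : ⟪u, toEuclideanLin H u⟫ ≤ C) : ‖u‖ ≤ √(C / ρ) :=
  Real.le_sqrt_of_sq_le <| (le_div_iff₀' hρ).mpr <|
    (hH.mul_norm_sq_le_inner_toEuclideanLin u).trans hu

theorem mul_inner_toEuclideanLin_le_of_norm_le {P : Matrix (Fin d) (Fin d) ℝ}
    {R H : Matrix (Fin m) (Fin m) ℝ} {lam c b X : ℝ} (hP : P.PosSemidef) (hc0 : 0 ≤ c)
    (hc : ∀ v, ⟪v, toEuclideanLin P v⟫ ≤ c * ‖v‖ ^ 2) (hR : R.PosDef) (hH : H.PosSemidef)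
    (hlam : 0 ≤ lam) (hA : matNorm A ≤ α) (hB : matNorm B ≤ β) (hβ : 0 ≤ β)
    {x : EuclideanSpace ℝ (Fin d)} (hx : ‖x‖ ≤ X) {u : EuclideanSpace ℝ (Fin m)}
    (hu : u = -toEuclideanLin ((Bᵀ * P * B + R + lam • H)⁻¹ * (Bᵀ * P * A)) x) (hub : ‖u‖ ≤ b) :
    lam * ⟪u, toEuclideanLin H u⟫ ≤ β * b * (c * (α * X)) := by
  rw [add_assoc] at hu
  have hfb := inner_toEuclideanLin_feedback_le hP hc0 hc (hR.add_posSemidef (hH.smul hlam)) x hu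
  simp only [map_add, map_smul, LinearMap.add_apply, LinearMap.smul_apply, inner_add_right,
    inner_smul_right] at hfb
  have hRu := hR.posSemidef.inner_toEuclideanLin_self_nonneg u
  have hBu : ‖toEuclideanLin B u‖ ≤ β * b :=
    (norm_toEuclideanLin_apply_le hB u).trans (mul_le_mul_of_nonneg_left hub hβ)
  have hAx : ‖toEuclideanLin A x‖ ≤ α * X :=
    (norm_toEuclideanLin_apply_le hA x).trans <|
      mul_le_mul_of_nonneg_left hx ((matNorm_nonneg A).trans hA)
  calc lam * ⟪u, toEuclideanLin H u⟫
      ≤ c * ‖toEuclideanLin B u‖ * ‖toEuclideanLin A x‖ := by linarith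
    _ ≤ c * (β * b) * (α * X) :=
        mul_le_mul (mul_le_mul_of_nonneg_left hBu hc0) hAx (norm_nonneg _)
          (mul_nonneg hc0 ((norm_nonneg _).trans hBu))
    _ = β * b * (c * (α * X)) := by ring

end OperatorNorm

theorem stmt_11_general {d m : ℕ} (n N : ℕ) (hn : 1 ≤ n)
    (α β γ ρ lamDag δmax : ℝ)
    (hα : 0 < α) (hβ : 0 < β) (hρ : 0 < ρ)
    (hδmax : 0 < δmax)
    (C : ℕ → ℝ) (hC : ∀ k, k < N → 0 < C k)
    (A : Fin n → Matrix (Fin d) (Fin d) ℝ) (hA : ∀ i, matNorm (A i) ≤ α)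
    (B : Fin n → Matrix (Fin d) (Fin m) ℝ) (hB : ∀ i, matNorm (B i) ≤ β)
    (Q : Fin n → Matrix (Fin d) (Fin d) ℝ) (hQ : ∀ i, (Q i).PosDef)
    (hQn : ∀ i, matNorm (Q i) ≤ δmax)
    (R : Fin n → Matrix (Fin m) (Fin m) ℝ) (hR : ∀ i, (R i).PosDef)
    (H : Fin n → Matrix (Fin m) (Fin m) ℝ)
    (hHρ : ∀ i, (H i - ρ • (1 : Matrix (Fin m) (Fin m) ℝ)).PosSemidef)
    (lam : ℕ → ℝ) (hlam : ∀ k, k < N → 0 < lam k)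
    (P : Fin n → ℕ → Matrix (Fin d) (Fin d) ℝ)
    (hPN : ∀ i, P i N = Q i)
    (hPrec : ∀ i, ∀ k, k < N → P i k = (A i)ᵀ * P i (k + 1) * A i + Q i
      - (A i)ᵀ * P i (k + 1) * B i
        * ((B i)ᵀ * P i (k + 1) * B i + R i + lam k • H i)⁻¹
        * ((B i)ᵀ * P i (k + 1) * A i))
    (x : Fin n → ℕ → EuclideanSpace ℝ (Fin d)) (hx0 : ∀ i, ‖x i 0‖ ≤ γ)
    (u : Fin n → ℕ → EuclideanSpace ℝ (Fin m))
    (hu : ∀ i, ∀ k, k < N → u i k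
      = - Matrix.toEuclideanLin
            (((B i)ᵀ * P i (k + 1) * B i + R i + lam k • H i)⁻¹
              * ((B i)ᵀ * P i (k + 1) * A i)) (x i k))
    (hxdyn : ∀ i, ∀ k, k < N →
      x i (k + 1) = Matrix.toEuclideanLin (A i) (x i k) + Matrix.toEuclideanLin (B i) (u i k))
    (hbal : ∀ k, k < N → ∑ i, ⟪u i k, Matrix.toEuclideanLin (H i) (u i k)⟫ = C k)
    (hcond0 : δmax * ∑ t ∈ Icc 1 N, γ * α ^ (2 * t - 1)
      ≤ (Real.sqrt (C 0 * ρ) / (n * β)) * lamDag)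
    (hcondk : ∀ k, 1 ≤ k → k < N →
      δmax * ∑ t ∈ Icc (k + 1) N,
        (γ * α ^ (2 * t - k - 1)
          + β * ∑ j ∈ range k, Real.sqrt (C j / ρ) * α ^ (2 * t - j - k - 2))
      ≤ (Real.sqrt (C k * ρ) / (n * β)) * lamDag) :
    ∀ k, k < N → lam k ≤ lamDag := by
  have hH : ∀ i, (H i).PosSemidef := fun i => (hHρ i).of_sub_smul_one hρ.le
  have hP : ∀ i, ∀ k ≤ N, (P i k).PosSemidef
      ∧ ∀ v, ⟪v, toEuclideanLin (P i k) v⟫ ≤ riccatiBound δmax α (N - k + 1) * ‖v‖ ^ 2 :=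
    fun i k hk => riccati_posSemidef_and_inner_le (hA i) (hQ i).posSemidef (hQn i) hδmax.le
      (fun k hk => (hR i).add_posSemidef ((hH i).smul (hlam k hk).le)) (hPN i)
      (fun k hk => by rw [hPrec i k hk, riccatiStep, add_assoc]) hk
  have hu_le : ∀ i, ∀ k < N, ‖u i k‖ ≤ √(C k / ρ) := fun i k hk =>
    norm_le_sqrt_div_of_inner_le hρ (hHρ i) <| hbal k hk ▸
      single_le_sum (fun j _ => (hH j).inner_toEuclideanLin_self_nonneg (u j k)) (mem_univ i)
  have hx_le : ∀ i, ∀ k ≤ N, ‖x i k‖ ≤ stateBound α β γ (fun j => √(C j / ρ)) k :=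
    fun i k hk => le_stateBound (e := fun k => ‖x i k‖) hα.le (hx0 i) (fun j hj => by
      rw [hxdyn i j hj]
      refine (norm_add_le _ _).trans (add_le_add (norm_toEuclideanLin_apply_le (hA i) _) ?_)
      exact (norm_toEuclideanLin_apply_le (hB i) _).trans (by gcongr; exact hu_le i j hj)) hk
  intro k hk
  have hcond : riccatiBound δmax α (N - k) * (α * stateBound α β γ (fun j => √(C j / ρ)) k)
      ≤ √(C k * ρ) / (n * β) * lamDag := by
    rw [riccatiBound_mul_stateBound]
    rcases Nat.eq_zero_or_pos k with rfl | hk1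
    · simpa using hcond0
    · exact hcondk k hk1 hk
  refine le_of_sum_eq_of_mul_le (by omega) (hC k hk) hρ hβ (hbal k hk) (fun i => ?_) hcond
  obtain ⟨hPk, hPk_le⟩ := hP i (k + 1) hk
  rw [show N - (k + 1) + 1 = N - k by omega] at hPk_le
  exact mul_inner_toEuclideanLin_le_of_norm_le hPk (riccatiBound_nonneg hδmax.le _) hPk_le
    (hR i) (hH i) (hlam k hk).le (hA i) (hB i) hβ.le (hx_le i k hk.le) (hu i k hk) (hu_le i k hk)

/-- Theorem 3, dynamic programming approach: under the stated bounds on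
`δmax`, the equilibrium prices defined through the finite-horizon LQR (Riccati) recursion
are socially resilient at every time step: `λ_k ≤ λ†` for all `k < N`. -/
theorem stmt_11 {d m : ℕ} (n N : ℕ) (hn : 1 ≤ n) (hN : 1 ≤ N)
    (α β γ ρ lamDag δmax : ℝ)
    (hα : 0 < α) (hβ : 0 < β) (hγ : 0 < γ) (hρ : 0 < ρ)
    (hlamDag : 0 < lamDag) (hδmax : 0 < δmax)
    (C : ℕ → ℝ) (hC : ∀ k, k < N → 0 < C k)
    (A : Fin n → Matrix (Fin d) (Fin d) ℝ) (hA : ∀ i, matNorm (A i) ≤ α)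
    (B : Fin n → Matrix (Fin d) (Fin m) ℝ) (hB : ∀ i, matNorm (B i) ≤ β)
    (Q : Fin n → Matrix (Fin d) (Fin d) ℝ) (hQ : ∀ i, (Q i).PosDef)
    (hQn : ∀ i, matNorm (Q i) ≤ δmax)
    (R : Fin n → Matrix (Fin m) (Fin m) ℝ) (hR : ∀ i, (R i).PosDef)
    (H : Fin n → Matrix (Fin m) (Fin m) ℝ) (hHsym : ∀ i, (H i).IsHermitian)
    (hHρ : ∀ i, (H i - ρ • (1 : Matrix (Fin m) (Fin m) ℝ)).PosSemidef)
    (lam : ℕ → ℝ) (hlam : ∀ k, k < N → 0 < lam k)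
    (P : Fin n → ℕ → Matrix (Fin d) (Fin d) ℝ)
    (hPN : ∀ i, P i N = Q i)
    (hPrec : ∀ i, ∀ k, k < N → P i k = (A i)ᵀ * P i (k + 1) * A i + Q i
      - (A i)ᵀ * P i (k + 1) * B i
        * ((B i)ᵀ * P i (k + 1) * B i + R i + lam k • H i)⁻¹
        * ((B i)ᵀ * P i (k + 1) * A i))
    (x : Fin n → ℕ → EuclideanSpace ℝ (Fin d)) (hx0 : ∀ i, ‖x i 0‖ ≤ γ)
    (u : Fin n → ℕ → EuclideanSpace ℝ (Fin m))
    (hu : ∀ i, ∀ k, k < N → u i k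
      = - Matrix.toEuclideanLin
            (((B i)ᵀ * P i (k + 1) * B i + R i + lam k • H i)⁻¹
              * ((B i)ᵀ * P i (k + 1) * A i)) (x i k))
    (hxdyn : ∀ i, ∀ k, k < N →
      x i (k + 1) = Matrix.toEuclideanLin (A i) (x i k) + Matrix.toEuclideanLin (B i) (u i k))
    (hbal : ∀ k, k < N → ∑ i, ⟪u i k, Matrix.toEuclideanLin (H i) (u i k)⟫ = C k)
    (hcond0 : δmax * ∑ t ∈ Icc 1 N, γ * α ^ (2 * t - 1)
      ≤ (Real.sqrt (C 0 * ρ) / (n * β)) * lamDag)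
    (hcondk : ∀ k, 1 ≤ k → k < N →
      δmax * ∑ t ∈ Icc (k + 1) N,
        (γ * α ^ (2 * t - k - 1)
          + β * ∑ j ∈ range k, Real.sqrt (C j / ρ) * α ^ (2 * t - j - k - 2))
      ≤ (Real.sqrt (C k * ρ) / (n * β)) * lamDag) :
    ∀ k, k < N → lam k ≤ lamDag :=
  stmt_11_general n N hn α β γ ρ lamDag δmax hα hβ hρ hδmax C hC A hA B hB Q hQ hQn R hR H hHρ lam
    hlam P hPN hPrec x hx0 u hu hxdyn hbal hcond0 hcondk
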